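/- arXiv:2311.02182 — 6 statements merged into one kernel-verified Lean document; each statement's English description precedes it below -/
import Mathlib

section
/- For any two probability distributions p and q on a finite set X and any ε ≥ 0, the following are equivalent: (i) there exist probability distributions p' and q' on X such that p(x) = q(x) + ε·p'(x) − ε·q'(x) for all x; (ii) the total variation distance δ(p,q) = (1/2)·Σ_x |p(x) − q(x)| is at most ε. -/
/-- For any two probability distributions `p` and `q` on a finite set `X` and any `ε ≥ 0`,
the existence of distributions `p'`, `q'` with `p = q + ε p' - ε q'` is equivalent to the
total variation distance `δ(p,q) = (1/2) Σ |p - q|` being at most `ε`. -/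
theorem stmt_0 {X : Type*} [Fintype X] (p q : X → ℝ) (ε : ℝ)
    (hp0 : ∀ x, 0 ≤ p x) (hp1 : ∑ x, p x = 1)
    (hq0 : ∀ x, 0 ≤ q x) (hq1 : ∑ x, q x = 1)
    (hε : 0 ≤ ε) :
    (∃ p' q' : X → ℝ,
      (∀ x, 0 ≤ p' x) ∧ (∑ x, p' x = 1) ∧
      (∀ x, 0 ≤ q' x) ∧ (∑ x, q' x = 1) ∧
      ∀ x, p x = q x + ε * p' x - ε * q' x) ↔
    (1 / 2) * ∑ x, |p x - q x| ≤ ε := by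
  constructor
  · rintro ⟨p', q', hp'0, hp'1, hq'0, hq'1, heq⟩
    have h : ∑ x, |p x - q x| ≤ ε * 2 := by
      calc ∑ x, |p x - q x| ≤ ∑ x, ε * (p' x + q' x) := by
            apply Finset.sum_le_sum
            intro x _
            have h1 : p x - q x = ε * p' x - ε * q' x := by rw [heq x]; ring
            rw [h1]
            calc |ε * p' x - ε * q' x| ≤ |ε * p' x| + |ε * q' x| := abs_sub _ _
              _ = ε * p' x + ε * q' x := by
                  rw [abs_of_nonneg (mul_nonneg hε (hp'0 x)),
                    abs_of_nonneg (mul_nonneg hε (hq'0 x))]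
              _ = ε * (p' x + q' x) := by ring
        _ = ε * 2 := by
            rw [← Finset.mul_sum, Finset.sum_add_distrib, hp'1, hq'1]; ring
    linarith
  · intro h
    set d := (1/2) * ∑ x, |p x - q x| with hd
    have hd0 : 0 ≤ d := by
      have : 0 ≤ ∑ x, |p x - q x| :=
        Finset.sum_nonneg (fun x _ => abs_nonneg _)
      positivity
    rcases eq_or_lt_of_le hε with hε0 | hεpos
    · -- ε = 0, so p = q
      have hd' : d = 0 := le_antisymm (hε0 ▸ h) hd0
      have hsum0 : ∑ x, |p x - q x| = 0 := by
        have := hd'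
        rw [hd] at this
        linarith
      have hpq : ∀ x, p x = q x := by
        intro x
        have := (Finset.sum_eq_zero_iff_of_nonneg
          (fun x _ => abs_nonneg (p x - q x))).mp hsum0 x (Finset.mem_univ x)
        have := abs_eq_zero.mp this
        linarith
      exact ⟨p, p, hp0, hp1, hp0, hp1, fun x => by rw [hpq x]; ring⟩
    · have hεp : 0 < ε := hεpos
      have hsum_pq : ∑ x, (p x - q x) = 0 := by
        rw [Finset.sum_sub_distrib, hp1, hq1]; ring
      have hf : ∑ x, max (p x - q x) 0 = d := by
        have : ∀ x, max (p x - q x) 0 = ((p x - q x) + |p x - q x|) / 2 := by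
          intro x; rcases le_or_gt (p x - q x) 0 with h' | h'
          · rw [max_eq_right h', abs_of_nonpos h']; ring
          · rw [max_eq_left h'.le, abs_of_pos h']; ring
        simp_rw [this]
        rw [← Finset.sum_div, Finset.sum_add_distrib, hsum_pq, hd]; ring
      have hg : ∑ x, max (q x - p x) 0 = d := by
        have : ∀ x, max (q x - p x) 0 = (-(p x - q x) + |p x - q x|) / 2 := by
          intro x; rcases le_or_gt (p x - q x) 0 with h' | h'
          · rw [max_eq_left (by linarith), abs_of_nonpos h']; ring
          · rw [max_eq_right (by linarith), abs_of_pos h']; ring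
        simp_rw [this]
        rw [← Finset.sum_div, Finset.sum_add_distrib, Finset.sum_neg_distrib,
          hsum_pq, hd]; ring
      refine ⟨fun x => (max (p x - q x) 0 + (ε - d) * p x) / ε,
              fun x => (max (q x - p x) 0 + (ε - d) * p x) / ε,
              ?_, ?_, ?_, ?_, ?_⟩
      · intro x
        apply div_nonneg _ hε
        have := le_max_right (p x - q x) 0
        nlinarith [hp0 x, h]
      · rw [← Finset.sum_div, Finset.sum_add_distrib, hf, ← Finset.mul_sum, hp1]
        field_simp
        ring
      · intro x
        apply div_nonneg _ hε
        have := le_max_right (q x - p x) 0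
        nlinarith [hp0 x, h]
      · rw [← Finset.sum_div, Finset.sum_add_distrib, hg, ← Finset.mul_sum, hp1]
        field_simp
        ring
      · intro x
        have hmax : max (p x - q x) 0 - max (q x - p x) 0 = p x - q x := by
          rcases le_or_gt (p x - q x) 0 with h' | h'
          · rw [max_eq_right h', max_eq_left (by linarith)]; ring
          · rw [max_eq_left h'.le, max_eq_right (by linarith)]; ring
        field_simp
        nlinarith [hmax]
end

section
/- (Exact PTC rigidity on the full-measure case) Let α, β, γ be independent random variables on finite sets and a(β,γ), b(α,γ), c(α,β) Boolean functions with a ⊕ b ⊕ c = 1 holding with probability 1. Then, restricting to values of α, β, γ of positive probability, there exist Boolean token functions t_α, t_β, t_γ such that a(β,γ) = t_β ⊕ t_γ ⊕ 1, b(α,γ) = t_α ⊕ t_γ ⊕ 1, and c(α,β) = t_α ⊕ t_β ⊕ 1 for all such values. -/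
/-!
Subtracting the parity condition at two values of `γ` shows that `a β γ - a β γ₀` does not
depend on `β`, so `a` splits as a function of `β` plus a function of `γ`. Reading the tokens
off at base points `β₀, γ₀` then makes the three required identities instances of the parity
condition in characteristic 2.
-/

theorem add_eq_add_of_forall_add_add_eq {R A B C : Type*} [CommRing R] {a : B → C → R}
    {b : A → C → R} {c : A → B → R} {k : R} (h : ∀ α β γ, a β γ + b α γ + c α β = k)
    (α : A) (β β₀ : B) (γ γ₀ : C) : a β γ + a β₀ γ₀ = a β γ₀ + a β₀ γ := by
  linear_combination h α β γ - h α β γ₀ - h α β₀ γ + h α β₀ γ₀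

theorem stmt_3_general {A B C : Type*}
    (a : B → C → ZMod 2) (b : A → C → ZMod 2) (c : A → B → ZMod 2)
    (hparity : ∀ (α : A) (β : B) (γ : C), a β γ + b α γ + c α β = 1) :
    ∃ (tα : A → ZMod 2) (tβ : B → ZMod 2) (tγ : C → ZMod 2),
      ∀ (α : A) (β : B) (γ : C),
        a β γ = tβ β + tγ γ + 1 ∧
        b α γ = tα α + tγ γ + 1 ∧
        c α β = tα α + tβ β + 1 := by
  rcases isEmpty_or_nonempty (A × B × C) with h | ⟨α₀, β₀, γ₀⟩
  · exact ⟨0, 0, 0, fun α β γ => (h.false (α, β, γ)).elim⟩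
  refine ⟨fun α => b α γ₀, fun β => a β γ₀, fun γ => a β₀ γ + a β₀ γ₀ + 1,
    fun α β γ => ⟨?_, ?_, ?_⟩⟩
  · linear_combination (norm := (ring_nf; reduce_mod_char))
      add_eq_add_of_forall_add_add_eq hparity α₀ β β₀ γ γ₀
  · linear_combination (norm := (ring_nf; reduce_mod_char)) hparity α β₀ γ₀ - hparity α β₀ γ
  · linear_combination (norm := (ring_nf; reduce_mod_char)) hparity α β γ₀

/-- Exact PTC rigidity: if independent full-support sources `α, β, γ` and Boolean response
functions satisfy the parity condition `a ⊕ b ⊕ c = 1` everywhere, then there exist Boolean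
token functions `t_α, t_β, t_γ` with `a(β,γ) = t_β ⊕ t_γ ⊕ 1`, `b(α,γ) = t_α ⊕ t_γ ⊕ 1` and
`c(α,β) = t_α ⊕ t_β ⊕ 1` for all values. -/
theorem stmt_3 {A B C : Type*} [Fintype A] [Fintype B] [Fintype C]
    (pα : A → ℝ) (pβ : B → ℝ) (pγ : C → ℝ)
    (hα0 : ∀ x, 0 < pα x) (hα1 : ∑ x, pα x = 1)
    (hβ0 : ∀ x, 0 < pβ x) (hβ1 : ∑ x, pβ x = 1)
    (hγ0 : ∀ x, 0 < pγ x) (hγ1 : ∑ x, pγ x = 1)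
    (a : B → C → ZMod 2) (b : A → C → ZMod 2) (c : A → B → ZMod 2)
    (hparity : ∀ (α : A) (β : B) (γ : C), a β γ + b α γ + c α β = 1) :
    ∃ (tα : A → ZMod 2) (tβ : B → ZMod 2) (tγ : C → ZMod 2),
      ∀ (α : A) (β : B) (γ : C),
        a β γ = tβ β + tγ γ + 1 ∧
        b α γ = tα α + tγ γ + 1 ∧
        c α β = tα α + tβ β + 1 :=
  stmt_3_general a b c hparity
end

section
/- For the TBSM quantum distribution with state |ψ⟩ = λ₀|01⟩ + λ₁|10⟩ at each source and tilted-Bell-measurement projectors at each party, the probability of outcome (a = (1,i), b = (1,j), c = (1,k)) equals (λ₀³ u_i u_j u_k + λ₁³ v_i v_j v_k)², where u₀ = u, v₀ = v, u₁ = v, v₁ = −u. -/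
/-- Amplitude of the two-qubit source state `|ψ⟩ = λ₀|01⟩ + λ₁|10⟩`. -/
noncomputable def psiAmp (l0 l1 : ℝ) (q1 q2 : ZMod 2) : ℝ :=
  if q1 = 0 ∧ q2 = 1 then l0 else if q1 = 1 ∧ q2 = 0 then l1 else 0

/-- Amplitudes of the tilted Bell state measurement basis vectors `|φ_{x₁,x₂}⟩`. -/
noncomputable def phiAmp (u v w z : ℝ) (x : ZMod 2 × ZMod 2) (qL qR : ZMod 2) : ℝ :=
  if x = (1, 0) then (if qL = 0 ∧ qR = 1 then u else if qL = 1 ∧ qR = 0 then v else 0)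
  else if x = (1, 1) then (if qL = 0 ∧ qR = 1 then v else if qL = 1 ∧ qR = 0 then -u else 0)
  else if x = (0, 0) then (if qL = 0 ∧ qR = 0 then w else if qL = 1 ∧ qR = 1 then z else 0)
  else (if qL = 0 ∧ qR = 0 then z else if qL = 1 ∧ qR = 1 then -w else 0)

/-- Transition amplitude `⟨φ_{x_a} ⊗ φ_{x_b} ⊗ φ_{x_c}| ψ_α ⊗ ψ_β ⊗ ψ_γ⟩` for the triangle
network with sources `α → (B_L, C_R)`, `β → (C_L, A_R)`, `γ → (A_L, B_R)`. -/
noncomputable def tbsmAmp (l0 l1 u v w z : ℝ) (xa xb xc : ZMod 2 × ZMod 2) : ℝ :=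
  ∑ aL : ZMod 2, ∑ aR : ZMod 2, ∑ bL : ZMod 2, ∑ bR : ZMod 2, ∑ cL : ZMod 2, ∑ cR : ZMod 2,
    phiAmp u v w z xa aL aR * phiAmp u v w z xb bL bR * phiAmp u v w z xc cL cR *
      psiAmp l0 l1 bL cR * psiAmp l0 l1 cL aR * psiAmp l0 l1 aL bR

/-- Born-rule probability of the joint outcome `(x_a, x_b, x_c)` in the TBSM model. -/
noncomputable def tbsmP (l0 l1 u v w z : ℝ) (xa xb xc : ZMod 2 × ZMod 2) : ℝ :=
  (tbsmAmp l0 l1 u v w z xa xb xc) ^ 2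

lemma sum_zmod2 (f : ZMod 2 → ℝ) : ∑ x : ZMod 2, f x = f 0 + f 1 := by
  have : (Finset.univ : Finset (ZMod 2)) = {0, 1} := by decide
  rw [this, Finset.sum_insert (by decide), Finset.sum_singleton]

set_option maxHeartbeats 2000000 in
/-- The TBSM probability of the outcome `((1,i),(1,j),(1,k))` equals
`(λ₀³ u_i u_j u_k + λ₁³ v_i v_j v_k)²` where `u₀ = u, v₀ = v, u₁ = v, v₁ = -u`. -/
theorem stmt_12 (l0 l1 u v w z : ℝ)
    (hl0 : 0 ≤ l0) (hl1 : 0 ≤ l1) (hu : 0 ≤ u) (hv : 0 ≤ v) (hw : 0 ≤ w) (hz : 0 ≤ z)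
    (hnl : l0 ^ 2 + l1 ^ 2 = 1) (hnu : u ^ 2 + v ^ 2 = 1) (hnw : w ^ 2 + z ^ 2 = 1)
    (i j k : ZMod 2) :
    tbsmP l0 l1 u v w z (1, i) (1, j) (1, k) =
      (l0 ^ 3 * (if i = 0 then u else v) * (if j = 0 then u else v) * (if k = 0 then u else v)
        + l1 ^ 3 * (if i = 0 then v else -u) * (if j = 0 then v else -u) *
            (if k = 0 then v else -u)) ^ 2 := by
  fin_cases i <;> fin_cases j <;> fin_cases k <;>
  · simp only [show (⟨0, by decide⟩ : Fin 2) = (0 : ZMod 2) from rfl, show (⟨1, by decide⟩ : Fin 2) = (1 : ZMod 2) from rfl]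
    simp only [tbsmP, tbsmAmp, sum_zmod2]
    norm_num [phiAmp, psiAmp, Prod.ext_iff]
    ring
end

section
/- For the TBSM quantum distribution, the first output bits satisfy the parity condition: Pr(a₁ ⊕ b₁ ⊕ c₁ = 1) = 1, where x₁ denotes the first component of each party's two-bit outcome. -/
/-! Each party's measurement basis is an orthonormal basis of its two qubits, so the
Kronecker product of the three bases is orthogonal and the outcome probabilities sum to
`‖ψ‖⁶ = (λ₀² + λ₁²)³ = 1`. A term of the amplitude survives only if every source emits one
excitation and every party's first output bit is the parity of the excitations it received;
summing over the parties gives `a₁ + b₁ + c₁ = 3 = 1` in `ZMod 2`, so outcomes of the other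
parity have amplitude zero. -/

open Matrix Kronecker

theorem ZMod.sum_univ_two {M : Type*} [AddCommMonoid M] (f : ZMod 2 → M) :
    ∑ x, f x = f 0 + f 1 :=
  Fin.sum_univ_two f

theorem ZMod.eq_zero_or_eq_one (a : ZMod 2) : a = 0 ∨ a = 1 := by
  decide +revert

namespace Matrix

variable {R : Type*} [CommRing R]

theorem sum_mulVec_sq_of_transpose_mul_self {m n : Type*} [Fintype m] [Fintype n]
    [DecidableEq n] {M : Matrix m n R} (hM : Mᵀ * M = 1) (f : n → R) :
    ∑ i, (M *ᵥ f) i ^ 2 = ∑ k, f k ^ 2 := by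
  calc ∑ i, (M *ᵥ f) i ^ 2 = (M *ᵥ f) ⬝ᵥ (M *ᵥ f) := by simp only [dotProduct, sq]
    _ = f ⬝ᵥ ((Mᵀ * M) *ᵥ f) := by
      rw [dotProduct_mulVec, ← vecMul_transpose, vecMul_vecMul, ← dotProduct_mulVec,
        ← vecMul_transpose, transpose_mul, transpose_transpose, dotProduct_comm]
    _ = ∑ k, f k ^ 2 := by simp only [hM, one_mulVec, dotProduct, sq]

theorem transpose_kronecker_mul_kronecker {ι κ ι' κ' : Type*} [Fintype ι] [Fintype ι']
    [DecidableEq κ] [DecidableEq κ'] {A : Matrix ι κ R} {B : Matrix ι' κ' R}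
    (hA : Aᵀ * A = 1) (hB : Bᵀ * B = 1) : (A ⊗ₖ B)ᵀ * (A ⊗ₖ B) = 1 := by
  rw [← kroneckerMap_transpose, ← mul_kronecker_mul, hA, hB, one_kronecker_one]

end Matrix

noncomputable def phiMat (u v w z : ℝ) : Matrix (ZMod 2 × ZMod 2) (ZMod 2 × ZMod 2) ℝ :=
  fun x q => phiAmp u v w z x q.1 q.2

theorem phiMat_transpose_mul_self {u v w z : ℝ} (hnu : u ^ 2 + v ^ 2 = 1)
    (hnw : w ^ 2 + z ^ 2 = 1) : (phiMat u v w z)ᵀ * phiMat u v w z = 1 := by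
  have h10 : (1 : ZMod 2) ≠ 0 := by decide
  ext ⟨a, b⟩ ⟨c, d⟩
  simp only [mul_apply, transpose_apply, phiMat, Fintype.sum_prod_type, ZMod.sum_univ_two]
  rcases a.eq_zero_or_eq_one with rfl | rfl <;> rcases b.eq_zero_or_eq_one with rfl | rfl <;>
    rcases c.eq_zero_or_eq_one with rfl | rfl <;> rcases d.eq_zero_or_eq_one with rfl | rfl <;>
    simp [phiAmp, h10, h10.symm] <;> linarith

/-- Qubits indexed by party, `((a_L, a_R), (b_L, b_R), (c_L, c_R))`. -/
abbrev SixQubits := (ZMod 2 × ZMod 2) × (ZMod 2 × ZMod 2) × (ZMod 2 × ZMod 2)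

/-- The wiring of the triangle: party-indexed qubits regrouped by the sources `α, β, γ`
that emit them, `((b_L, c_R), (c_L, a_R), (a_L, b_R))`. -/
def partyToSource : SixQubits ≃ SixQubits where
  toFun q := ((q.2.1.1, q.2.2.2), (q.2.2.1, q.1.2), (q.1.1, q.2.1.2))
  invFun s := ((s.2.2.1, s.2.1.2), (s.1.1, s.2.2.2), (s.2.1.1, s.1.2))
  left_inv _ := rfl
  right_inv _ := rfl

noncomputable def tbsmSource (l0 l1 : ℝ) (q : SixQubits) : ℝ :=
  psiAmp l0 l1 q.2.1.1 q.2.2.2 * psiAmp l0 l1 q.2.2.1 q.1.2 * psiAmp l0 l1 q.1.1 q.2.1.2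

theorem sum_sq_psiAmp (l0 l1 : ℝ) :
    ∑ p : ZMod 2 × ZMod 2, psiAmp l0 l1 p.1 p.2 ^ 2 = l0 ^ 2 + l1 ^ 2 := by
  have h10 : (1 : ZMod 2) ≠ 0 := by decide
  simp [Fintype.sum_prod_type, ZMod.sum_univ_two, psiAmp, h10, h10.symm, add_comm]

theorem sum_sq_tbsmSource (l0 l1 : ℝ) :
    ∑ q, tbsmSource l0 l1 q ^ 2 = (l0 ^ 2 + l1 ^ 2) ^ 3 := by
  set f : ZMod 2 × ZMod 2 → ℝ := fun p => psiAmp l0 l1 p.1 p.2 ^ 2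
  set g : SixQubits → ℝ := fun s => f s.1 * f s.2.1 * f s.2.2
  calc ∑ q, tbsmSource l0 l1 q ^ 2 = ∑ q, g (partyToSource q) := by
        simp only [tbsmSource, mul_pow]; rfl
    _ = ∑ s, g s := partyToSource.sum_comp g
    _ = (∑ p, f p) * ((∑ p, f p) * ∑ p, f p) := by
        simp only [g, Fintype.sum_mul_sum, ← Fintype.sum_prod_type', mul_assoc]
    _ = (l0 ^ 2 + l1 ^ 2) ^ 3 := by rw [sum_sq_psiAmp]; ring

theorem tbsmAmp_eq_mulVec (l0 l1 u v w z : ℝ) (xa xb xc : ZMod 2 × ZMod 2) :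
    tbsmAmp l0 l1 u v w z xa xb xc =
      ((phiMat u v w z ⊗ₖ (phiMat u v w z ⊗ₖ phiMat u v w z)) *ᵥ tbsmSource l0 l1)
        (xa, xb, xc) := by
  simp only [tbsmAmp, mulVec, dotProduct, Fintype.sum_prod_type, kroneckerMap_apply, phiMat,
    tbsmSource, mul_assoc]

theorem sum_tbsmP {l0 l1 u v w z : ℝ} (hnu : u ^ 2 + v ^ 2 = 1) (hnw : w ^ 2 + z ^ 2 = 1) :
    ∑ x : (ZMod 2 × ZMod 2) × (ZMod 2 × ZMod 2) × (ZMod 2 × ZMod 2),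
      tbsmP l0 l1 u v w z x.1 x.2.1 x.2.2 = (l0 ^ 2 + l1 ^ 2) ^ 3 := by
  have hΦ := phiMat_transpose_mul_self hnu hnw
  simp only [tbsmP, tbsmAmp_eq_mulVec]
  rw [sum_mulVec_sq_of_transpose_mul_self
    (transpose_kronecker_mul_kronecker hΦ (transpose_kronecker_mul_kronecker hΦ hΦ)),
    sum_sq_tbsmSource]

theorem fst_eq_add_of_phiAmp_ne_zero {u v w z : ℝ} {x : ZMod 2 × ZMod 2} {qL qR : ZMod 2}
    (h : phiAmp u v w z x qL qR ≠ 0) : x.1 = qL + qR := by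
  obtain ⟨a, b⟩ := x
  revert h
  rcases a.eq_zero_or_eq_one with rfl | rfl <;> rcases b.eq_zero_or_eq_one with rfl | rfl <;>
    rcases qL.eq_zero_or_eq_one with rfl | rfl <;> rcases qR.eq_zero_or_eq_one with rfl | rfl <;>
    simp +decide [phiAmp]

theorem add_eq_one_of_psiAmp_ne_zero {l0 l1 : ℝ} {p q : ZMod 2} (h : psiAmp l0 l1 p q ≠ 0) :
    p + q = 1 := by
  revert h
  rcases p.eq_zero_or_eq_one with rfl | rfl <;> rcases q.eq_zero_or_eq_one with rfl | rfl <;>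
    simp +decide [psiAmp]

theorem tbsmAmp_eq_zero_of_parity_ne_one {l0 l1 u v w z : ℝ} {xa xb xc : ZMod 2 × ZMod 2}
    (h : xa.1 + xb.1 + xc.1 ≠ 1) : tbsmAmp l0 l1 u v w z xa xb xc = 0 := by
  refine Finset.sum_eq_zero fun aL _ => Finset.sum_eq_zero fun aR _ =>
    Finset.sum_eq_zero fun bL _ => Finset.sum_eq_zero fun bR _ =>
    Finset.sum_eq_zero fun cL _ => Finset.sum_eq_zero fun cR _ => ?_
  by_contra hne
  simp only [mul_ne_zero_iff] at hne
  obtain ⟨⟨⟨⟨⟨ha, hb⟩, hc⟩, hα⟩, hβ⟩, hγ⟩ := hne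
  apply h
  rw [fst_eq_add_of_phiAmp_ne_zero ha, fst_eq_add_of_phiAmp_ne_zero hb,
    fst_eq_add_of_phiAmp_ne_zero hc]
  linear_combination add_eq_one_of_psiAmp_ne_zero hα + add_eq_one_of_psiAmp_ne_zero hβ +
    add_eq_one_of_psiAmp_ne_zero hγ + (by decide : (2 : ZMod 2) = 0)

theorem stmt_13_general (l0 l1 u v w z : ℝ)
    (hnl : l0 ^ 2 + l1 ^ 2 = 1) (hnu : u ^ 2 + v ^ 2 = 1) (hnw : w ^ 2 + z ^ 2 = 1) :
    ∑ x ∈ Finset.univ.filter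
        (fun x : (ZMod 2 × ZMod 2) × (ZMod 2 × ZMod 2) × (ZMod 2 × ZMod 2) =>
          x.1.1 + x.2.1.1 + x.2.2.1 = 1),
      tbsmP l0 l1 u v w z x.1 x.2.1 x.2.2 = 1 := by
  rw [Finset.sum_filter_of_ne fun x _ hx => ?_, sum_tbsmP hnu hnw, hnl, one_pow]
  by_contra hparity
  exact hx (by rw [tbsmP, tbsmAmp_eq_zero_of_parity_ne_one hparity, sq, zero_mul])

/-- For the TBSM quantum distribution the first output bits satisfy the parity condition
`a₁ ⊕ b₁ ⊕ c₁ = 1` with probability one. -/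
theorem stmt_13 (l0 l1 u v w z : ℝ)
    (hl0 : 0 ≤ l0) (hl1 : 0 ≤ l1) (hu : 0 ≤ u) (hv : 0 ≤ v) (hw : 0 ≤ w) (hz : 0 ≤ z)
    (hnl : l0 ^ 2 + l1 ^ 2 = 1) (hnu : u ^ 2 + v ^ 2 = 1) (hnw : w ^ 2 + z ^ 2 = 1) :
    ∑ x ∈ Finset.univ.filter
        (fun x : (ZMod 2 × ZMod 2) × (ZMod 2 × ZMod 2) × (ZMod 2 × ZMod 2) =>
          x.1.1 + x.2.1.1 + x.2.2.1 = 1),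
      tbsmP l0 l1 u v w z x.1 x.2.1 x.2.2 = 1 :=
  stmt_13_general l0 l1 u v w z hnl hnu hnw
end

section
/- In a triangle-local model producing outputs (x₁, x₂) = ((a₁,a₂),(b₁,b₂),(c₁,c₂)) whose first bits satisfy a₁ ⊕ b₁ ⊕ c₁ = 1 with probability 1, the joint distribution factorizes as P(x₁, x₂) = Σ_t p(t)·P_PTC(x₁|t)·P(x₂|t), where t = (t_α, t_β, t_γ) are the token variables given by exact PTC rigidity, p(t) = p_α(t_α)p_β(t_β)p_γ(t_γ) is a product distribution, and P_PTC(x₁|t) is the deterministic parity token counting response. -/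
private lemma zmod2_a (x y z : ZMod 2) (h : x + y + z = 1) : x = z + y + 1 := by
  revert h; revert x y z; decide

private lemma zmod2_b (a b c b' c' : ZMod 2) (h1 : a + b + c = 1) (h2 : a + b' + c' = 1) :
    b = (c + c' + 1) + b' + 1 := by
  revert h1 h2; revert a b c b' c'; decide

private lemma zmod2_c (a b c a0 b0 c2' c1' c0 : ZMod 2)
    (h1 : a + b + c = 1) (h2 : a + b0 + c2' = 1) (h3 : a0 + b + c1' = 1)
    (h4 : a0 + b0 + c0 = 1) : c = (c1' + c0 + 1) + c2' + 1 := by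
  revert h1 h2 h3 h4; revert a b c a0 b0 c2' c1' c0; decide

/-- In a triangle-local model whose first output bits satisfy `a₁ ⊕ b₁ ⊕ c₁ = 1` with
probability one, the joint distribution factorizes as
`P(x₁,x₂) = Σ_t p(t) · P_PTC(x₁|t) · P(x₂|t)` with a product token distribution
`p(t) = p_α(t_α) p_β(t_β) p_γ(t_γ)`. -/
theorem stmt_14 {A B C A₂ B₂ C₂ : Type*}
    [Fintype A] [Fintype B] [Fintype C] [Fintype A₂] [Fintype B₂] [Fintype C₂]
    [DecidableEq A₂] [DecidableEq B₂] [DecidableEq C₂]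
    (pα : A → ℝ) (pβ : B → ℝ) (pγ : C → ℝ)
    (hα0 : ∀ x, 0 ≤ pα x) (hα1 : ∑ x, pα x = 1)
    (hβ0 : ∀ x, 0 ≤ pβ x) (hβ1 : ∑ x, pβ x = 1)
    (hγ0 : ∀ x, 0 ≤ pγ x) (hγ1 : ∑ x, pγ x = 1)
    (a1 : B → C → ZMod 2) (b1 : A → C → ZMod 2) (c1 : A → B → ZMod 2)
    (a2 : B → C → A₂) (b2 : A → C → B₂) (c2 : A → B → C₂)
    (P : (ZMod 2 × ZMod 2 × ZMod 2) → (A₂ × B₂ × C₂) → ℝ)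
    (hP : ∀ x1 x2, P x1 x2 =
      ∑ ξ : A × B × C,
        if x1 = (a1 ξ.2.1 ξ.2.2, b1 ξ.1 ξ.2.2, c1 ξ.1 ξ.2.1) ∧
            x2 = (a2 ξ.2.1 ξ.2.2, b2 ξ.1 ξ.2.2, c2 ξ.1 ξ.2.1) then
          pα ξ.1 * pβ ξ.2.1 * pγ ξ.2.2
        else 0)
    (hparity : ∀ (α : A) (β : B) (γ : C),
      0 < pα α → 0 < pβ β → 0 < pγ γ → a1 β γ + b1 α γ + c1 α β = 1) :
    ∃ (qα qβ qγ : ZMod 2 → ℝ) (P2 : ZMod 2 × ZMod 2 × ZMod 2 → (A₂ × B₂ × C₂) → ℝ),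
      (∀ t, 0 ≤ qα t) ∧ (∑ t, qα t = 1) ∧
      (∀ t, 0 ≤ qβ t) ∧ (∑ t, qβ t = 1) ∧
      (∀ t, 0 ≤ qγ t) ∧ (∑ t, qγ t = 1) ∧
      (∀ t x2, 0 ≤ P2 t x2) ∧ (∀ t, ∑ x2, P2 t x2 = 1) ∧
      ∀ x1 x2, P x1 x2 =
        ∑ t : ZMod 2 × ZMod 2 × ZMod 2,
          qα t.1 * qβ t.2.1 * qγ t.2.2 *
            (if x1 = (t.2.1 + t.2.2 + 1, t.1 + t.2.2 + 1, t.1 + t.2.1 + 1) then 1 else 0) *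
            P2 t x2 := by
  -- pick reference points with positive probability
  have exA : ∃ a, 0 < pα a := by
    by_contra h
    push_neg at h
    have : ∑ x, pα x = 0 := Finset.sum_eq_zero (fun x _ => le_antisymm (h x) (hα0 x))
    rw [this] at hα1; norm_num at hα1
  have exB : ∃ b, 0 < pβ b := by
    by_contra h
    push_neg at h
    have : ∑ x, pβ x = 0 := Finset.sum_eq_zero (fun x _ => le_antisymm (h x) (hβ0 x))
    rw [this] at hβ1; norm_num at hβ1
  have exC : ∃ c, 0 < pγ c := by
    by_contra h
    push_neg at h
    have : ∑ x, pγ x = 0 := Finset.sum_eq_zero (fun x _ => le_antisymm (h x) (hγ0 x))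
    rw [this] at hγ1; norm_num at hγ1
  obtain ⟨α₀, hA0⟩ := exA
  obtain ⟨β₀, hB0⟩ := exB
  obtain ⟨γ₀, hC0⟩ := exC
  -- token functions
  set tA : A → ZMod 2 := fun α => c1 α β₀ + c1 α₀ β₀ + 1 with htA
  set tB : B → ZMod 2 := fun β => c1 α₀ β with htB
  set tC : C → ZMod 2 := fun γ => b1 α₀ γ with htC
  have keyA : ∀ β γ, 0 < pβ β → 0 < pγ γ → a1 β γ = tB β + tC γ + 1 := by
    intro β γ hβ hγ
    exact zmod2_a _ _ _ (hparity α₀ β γ hA0 hβ hγ)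
  have keyB : ∀ α γ, 0 < pα α → 0 < pγ γ → b1 α γ = tA α + tC γ + 1 := by
    intro α γ hα hγ
    exact zmod2_b _ _ _ _ _ (hparity α β₀ γ hα hB0 hγ) (hparity α₀ β₀ γ hA0 hB0 hγ)
  have keyC : ∀ α β, 0 < pα α → 0 < pβ β → c1 α β = tA α + tB β + 1 := by
    intro α β hα hβ
    exact zmod2_c _ _ _ _ _ _ _ _ (hparity α β γ₀ hα hβ hC0) (hparity α₀ β γ₀ hA0 hβ hC0)
      (hparity α β₀ γ₀ hα hB0 hC0) (hparity α₀ β₀ γ₀ hA0 hB0 hC0)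
  -- distributions
  set qα : ZMod 2 → ℝ := fun t => ∑ α, if tA α = t then pα α else 0 with hqα
  set qβ : ZMod 2 → ℝ := fun t => ∑ β, if tB β = t then pβ β else 0 with hqβ
  set qγ : ZMod 2 → ℝ := fun t => ∑ γ, if tC γ = t then pγ γ else 0 with hqγ
  set p : A × B × C → ℝ := fun ξ => pα ξ.1 * pβ ξ.2.1 * pγ ξ.2.2 with hp
  set F : A × B × C → ZMod 2 × ZMod 2 × ZMod 2 := fun ξ => (tA ξ.1, tB ξ.2.1, tC ξ.2.2) with hF
  set G : A × B × C → A₂ × B₂ × C₂ := fun ξ => (a2 ξ.2.1 ξ.2.2, b2 ξ.1 ξ.2.2, c2 ξ.1 ξ.2.1) with hG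
  set N : ZMod 2 × ZMod 2 × ZMod 2 → ℝ := fun t => qα t.1 * qβ t.2.1 * qγ t.2.2 with hNdef
  set x₀ : A₂ × B₂ × C₂ := (a2 β₀ γ₀, b2 α₀ γ₀, c2 α₀ β₀) with hx₀
  set P2 : ZMod 2 × ZMod 2 × ZMod 2 → A₂ × B₂ × C₂ → ℝ := fun t x2 =>
    if N t = 0 then (if x2 = x₀ then 1 else 0)
    else (∑ ξ : A × B × C, if F ξ = t ∧ x2 = G ξ then p ξ else 0) / N t with hP2
  have hp0 : ∀ ξ, 0 ≤ p ξ := fun ξ => mul_nonneg (mul_nonneg (hα0 _) (hβ0 _)) (hγ0 _)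
  have hqα0 : ∀ t, 0 ≤ qα t := fun t =>
    Finset.sum_nonneg (fun x _ => by split; exacts [hα0 x, le_rfl])
  have hqβ0 : ∀ t, 0 ≤ qβ t := fun t =>
    Finset.sum_nonneg (fun x _ => by split; exacts [hβ0 x, le_rfl])
  have hqγ0 : ∀ t, 0 ≤ qγ t := fun t =>
    Finset.sum_nonneg (fun x _ => by split; exacts [hγ0 x, le_rfl])
  have hN0 : ∀ t, 0 ≤ N t := fun t => mul_nonneg (mul_nonneg (hqα0 _) (hqβ0 _)) (hqγ0 _)
  -- fiber sum equals N
  have hNfiber : ∀ t, N t = ∑ ξ : A × B × C, if F ξ = t then p ξ else 0 := by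
    intro t
    obtain ⟨t1, t2, t3⟩ := t
    have hR : (∑ ξ : A × B × C, if F ξ = (t1, t2, t3) then p ξ else 0) =
        ∑ a, ∑ b, ∑ c, (if tA a = t1 then pα a else 0) *
          ((if tB b = t2 then pβ b else 0) * (if tC c = t3 then pγ c else 0)) := by
      rw [Fintype.sum_prod_type]
      refine Finset.sum_congr rfl fun a _ => ?_
      rw [Fintype.sum_prod_type]
      refine Finset.sum_congr rfl fun b _ => Finset.sum_congr rfl fun c _ => ?_
      simp only [hF, hp, Prod.mk.injEq, ite_and]
      split_ifs <;> ring
    rw [hR]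
    simp only [hNdef, hqα, hqβ, hqγ, Finset.sum_mul, Finset.mul_sum]
    conv_lhs => rw [Finset.sum_comm]
    conv_rhs => rw [Finset.sum_comm]
    refine Finset.sum_congr rfl fun b _ => ?_
    rw [Finset.sum_comm]
    exact Finset.sum_congr rfl fun a _ => Finset.sum_congr rfl fun c _ => by ring
  -- zero fibers have zero weight
  have hfiber0 : ∀ t ξ, N t = 0 → F ξ = t → p ξ = 0 := by
    intro t ξ hNt hFt
    have h := (hNfiber t).symm.trans hNt
    have h2 := (Finset.sum_eq_zero_iff_of_nonneg
      (fun x _ => by split; exacts [hp0 x, le_rfl])).mp h ξ (Finset.mem_univ ξ)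
    simpa [hFt] using h2
  refine ⟨qα, qβ, qγ, P2, hqα0, ?_, hqβ0, ?_, hqγ0, ?_, ?_, ?_, ?_⟩
  · simp only [hqα]
    rw [Finset.sum_comm]
    simpa [Finset.sum_ite_eq] using hα1
  · simp only [hqβ]
    rw [Finset.sum_comm]
    simpa [Finset.sum_ite_eq] using hβ1
  · simp only [hqγ]
    rw [Finset.sum_comm]
    simpa [Finset.sum_ite_eq] using hγ1
  · -- nonnegativity of P2
    intro t x2
    simp only [hP2]
    split_ifs with h
    · norm_num
    · norm_num
    · exact div_nonneg (Finset.sum_nonneg fun ξ _ => by split; exacts [hp0 ξ, le_rfl]) (hN0 t)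
  · -- normalization of P2
    intro t
    by_cases h : N t = 0
    · simp only [hP2, h, if_pos rfl, if_true]
      simp
    · simp only [hP2, if_neg h]
      rw [← Finset.sum_div]
      rw [Finset.sum_comm]
      have hin : ∀ ξ : A × B × C,
          (∑ x2 : A₂ × B₂ × C₂, if F ξ = t ∧ x2 = G ξ then p ξ else 0)
            = if F ξ = t then p ξ else 0 := by
        intro ξ
        by_cases hFt : F ξ = t
        · simp [hFt]
        · simp [hFt]
      rw [Finset.sum_congr rfl (fun ξ _ => hin ξ)]
      rw [← hNfiber t]
      exact div_self h
  · -- the factorization identity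
    intro x1 x2
    rw [hP x1 x2]
    have step1 : ∀ t : ZMod 2 × ZMod 2 × ZMod 2,
        qα t.1 * qβ t.2.1 * qγ t.2.2 *
          (if x1 = (t.2.1 + t.2.2 + 1, t.1 + t.2.2 + 1, t.1 + t.2.1 + 1) then 1 else 0) *
            P2 t x2
        = (if x1 = (t.2.1 + t.2.2 + 1, t.1 + t.2.2 + 1, t.1 + t.2.1 + 1) then 1 else 0) *
          ∑ ξ : A × B × C, if F ξ = t ∧ x2 = G ξ then p ξ else 0 := by
      intro t
      have hqN : qα t.1 * qβ t.2.1 * qγ t.2.2 = N t := rfl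
      by_cases h : N t = 0
      · have hz : (∑ ξ : A × B × C, if F ξ = t ∧ x2 = G ξ then p ξ else 0) = 0 := by
          refine Finset.sum_eq_zero fun ξ _ => ?_
          by_cases hFt : F ξ = t ∧ x2 = G ξ
          · simp [hFt, hfiber0 t ξ h hFt.1]
          · simp [hFt]
        rw [hz, hqN, h]
        ring
      · simp only [hP2, if_neg h, hqN]
        field_simp
    have step2 : ∀ ξ : A × B × C,
        (∑ t : ZMod 2 × ZMod 2 × ZMod 2,
          (if x1 = (t.2.1 + t.2.2 + 1, t.1 + t.2.2 + 1, t.1 + t.2.1 + 1) then 1 else 0) *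
            (if F ξ = t ∧ x2 = G ξ then p ξ else 0))
        = if x1 = (tB ξ.2.1 + tC ξ.2.2 + 1, tA ξ.1 + tC ξ.2.2 + 1, tA ξ.1 + tB ξ.2.1 + 1)
              ∧ x2 = G ξ then p ξ else 0 := by
      intro ξ
      rw [Finset.sum_eq_single (F ξ)
        (fun t _ ht => by simp [Ne.symm ht])
        (fun h => absurd (Finset.mem_univ _) h)]
      simp only [hF, true_and]
      by_cases h1 : x1 = (tB ξ.2.1 + tC ξ.2.2 + 1, tA ξ.1 + tC ξ.2.2 + 1, tA ξ.1 + tB ξ.2.1 + 1)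
        <;> by_cases h2 : x2 = G ξ <;> simp [h1, h2]
    calc (∑ ξ : A × B × C,
        if x1 = (a1 ξ.2.1 ξ.2.2, b1 ξ.1 ξ.2.2, c1 ξ.1 ξ.2.1) ∧
            x2 = (a2 ξ.2.1 ξ.2.2, b2 ξ.1 ξ.2.2, c2 ξ.1 ξ.2.1) then
          pα ξ.1 * pβ ξ.2.1 * pγ ξ.2.2
        else 0)
        = ∑ ξ : A × B × C, ∑ t : ZMod 2 × ZMod 2 × ZMod 2,
            (if x1 = (t.2.1 + t.2.2 + 1, t.1 + t.2.2 + 1, t.1 + t.2.1 + 1) then 1 else 0) *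
              (if F ξ = t ∧ x2 = G ξ then p ξ else 0) := by
          refine Finset.sum_congr rfl fun ξ _ => ?_
          rw [step2 ξ]
          rcases (hp0 ξ).lt_or_eq with hpos | hzero
          · have h1 : 0 < pα ξ.1 := by
              rcases (hα0 ξ.1).lt_or_eq with h | h
              · exact h
              · exfalso; simp only [hp] at hpos; rw [← h] at hpos; simp at hpos
            have h2 : 0 < pβ ξ.2.1 := by
              rcases (hβ0 ξ.2.1).lt_or_eq with h | h
              · exact h
              · exfalso; simp only [hp] at hpos; rw [← h] at hpos; simp at hpos
            have h3 : 0 < pγ ξ.2.2 := by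
              rcases (hγ0 ξ.2.2).lt_or_eq with h | h
              · exact h
              · exfalso; simp only [hp] at hpos; rw [← h] at hpos; simp at hpos
            rw [keyA _ _ h2 h3, keyB _ _ h1 h3, keyC _ _ h1 h2]
          · rw [show pα ξ.1 * pβ ξ.2.1 * pγ ξ.2.2 = p ξ from rfl, ← hzero]
            simp
      _ = ∑ t : ZMod 2 × ZMod 2 × ZMod 2, ∑ ξ : A × B × C,
            (if x1 = (t.2.1 + t.2.2 + 1, t.1 + t.2.2 + 1, t.1 + t.2.1 + 1) then 1 else 0) *
              (if F ξ = t ∧ x2 = G ξ then p ξ else 0) := Finset.sum_comm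
      _ = ∑ t : ZMod 2 × ZMod 2 × ZMod 2,
            (if x1 = (t.2.1 + t.2.2 + 1, t.1 + t.2.2 + 1, t.1 + t.2.1 + 1) then 1 else 0) *
              ∑ ξ : A × B × C, if F ξ = t ∧ x2 = G ξ then p ξ else 0 := by
          exact Finset.sum_congr rfl fun t _ => (Finset.mul_sum _ _ _).symm
      _ = ∑ t : ZMod 2 × ZMod 2 × ZMod 2,
            qα t.1 * qβ t.2.1 * qγ t.2.2 *
              (if x1 = (t.2.1 + t.2.2 + 1, t.1 + t.2.2 + 1, t.1 + t.2.1 + 1) then 1 else 0) *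
                P2 t x2 := Finset.sum_congr rfl fun t _ => (step1 t).symm
end

section
/- In the factorization P(x₁, x₂) = Σ_t p(t)·P_PTC(x₁|t)·P(x₂|t) arising from a triangle-local model with tokens defined locally at each source, the conditional marginal of a₂ does not depend on t_α: Σ_{b₂,c₂} P(a₂,b₂,c₂ | t_α = 0, t_β, t_γ) = Σ_{b₂,c₂} P(a₂,b₂,c₂ | t_α = 1, t_β, t_γ) for all a₂, t_β, t_γ (assuming both conditioning events have positive probability). -/
/-- In a triangle-local model with locally defined token functions, the conditional marginal
distribution of Alice's second output `a₂` given the token values does not depend on `t_α`. -/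
theorem stmt_15 {A B C A₂ B₂ C₂ : Type*}
    [Fintype A] [Fintype B] [Fintype C] [Fintype A₂] [Fintype B₂] [Fintype C₂]
    [DecidableEq A₂] [DecidableEq B₂] [DecidableEq C₂]
    (pα : A → ℝ) (pβ : B → ℝ) (pγ : C → ℝ)
    (hα0 : ∀ x, 0 ≤ pα x) (hα1 : ∑ x, pα x = 1)
    (hβ0 : ∀ x, 0 ≤ pβ x) (hβ1 : ∑ x, pβ x = 1)
    (hγ0 : ∀ x, 0 ≤ pγ x) (hγ1 : ∑ x, pγ x = 1)
    (a2 : B → C → A₂) (b2 : A → C → B₂) (c2 : A → B → C₂)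
    (tα : A → ZMod 2) (tβ : B → ZMod 2) (tγ : C → ZMod 2)
    (qα qβ qγ : ZMod 2 → ℝ)
    (hqα : ∀ t, qα t = ∑ x ∈ Finset.univ.filter (fun x : A => tα x = t), pα x)
    (hqβ : ∀ t, qβ t = ∑ x ∈ Finset.univ.filter (fun x : B => tβ x = t), pβ x)
    (hqγ : ∀ t, qγ t = ∑ x ∈ Finset.univ.filter (fun x : C => tγ x = t), pγ x)
    (J : (A₂ × B₂ × C₂) → ZMod 2 × ZMod 2 × ZMod 2 → ℝ)
    (hJ : ∀ x2 t, J x2 t =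
      ∑ ξ : A × B × C,
        if x2 = (a2 ξ.2.1 ξ.2.2, b2 ξ.1 ξ.2.2, c2 ξ.1 ξ.2.1) ∧
            t = (tα ξ.1, tβ ξ.2.1, tγ ξ.2.2) then
          pα ξ.1 * pβ ξ.2.1 * pγ ξ.2.2
        else 0)
    (tB tC : ZMod 2)
    (hpos0 : 0 < qα 0 * qβ tB * qγ tC)
    (hpos1 : 0 < qα 1 * qβ tB * qγ tC) :
    ∀ a₂ : A₂,
      (∑ b₂ : B₂, ∑ c₂ : C₂, J (a₂, b₂, c₂) (0, tB, tC)) / (qα 0 * qβ tB * qγ tC) =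
      (∑ b₂ : B₂, ∑ c₂ : C₂, J (a₂, b₂, c₂) (1, tB, tC)) / (qα 1 * qβ tB * qγ tC) := by
  intro a₂
  have key : ∀ tA : ZMod 2,
      (∑ b₂ : B₂, ∑ c₂ : C₂, J (a₂, b₂, c₂) (tA, tB, tC)) =
      qα tA * ∑ y : B, ∑ z : C,
        (if a₂ = a2 y z ∧ tB = tβ y ∧ tC = tγ z then pβ y * pγ z else 0) := by
    intro tA
    have step : (∑ b₂ : B₂, ∑ c₂ : C₂, J (a₂, b₂, c₂) (tA, tB, tC)) =
        ∑ ξ : A × B × C, ∑ b₂ : B₂, ∑ c₂ : C₂,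
          if (a₂, b₂, c₂) = (a2 ξ.2.1 ξ.2.2, b2 ξ.1 ξ.2.2, c2 ξ.1 ξ.2.1) ∧
              ((tA, tB, tC) : ZMod 2 × ZMod 2 × ZMod 2) = (tα ξ.1, tβ ξ.2.1, tγ ξ.2.2) then
            pα ξ.1 * pβ ξ.2.1 * pγ ξ.2.2
          else 0 := by
      simp only [hJ]
      exact (Finset.sum_congr rfl fun b₂ _ => Finset.sum_comm).trans Finset.sum_comm
    rw [step]
    have inner : ∀ ξ : A × B × C, (∑ b₂ : B₂, ∑ c₂ : C₂,
        if (a₂, b₂, c₂) = (a2 ξ.2.1 ξ.2.2, b2 ξ.1 ξ.2.2, c2 ξ.1 ξ.2.1) ∧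
            ((tA, tB, tC) : ZMod 2 × ZMod 2 × ZMod 2) = (tα ξ.1, tβ ξ.2.1, tγ ξ.2.2) then
          pα ξ.1 * pβ ξ.2.1 * pγ ξ.2.2
        else 0) =
        if a₂ = a2 ξ.2.1 ξ.2.2 ∧ tA = tα ξ.1 ∧ tB = tβ ξ.2.1 ∧ tC = tγ ξ.2.2 then
          pα ξ.1 * pβ ξ.2.1 * pγ ξ.2.2
        else 0 := by
      intro ξ
      simp only [Prod.mk.injEq]
      simp [Finset.sum_ite_eq, ite_and]
    simp only [inner]
    simp only [Fintype.sum_prod_type]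
    rw [hqα, Finset.sum_filter, Finset.sum_mul]
    refine Finset.sum_congr rfl fun x _ => ?_
    rw [Finset.mul_sum]
    refine Finset.sum_congr rfl fun y _ => ?_
    rw [Finset.mul_sum]
    refine Finset.sum_congr rfl fun z _ => ?_
    by_cases hx : tA = tα x
    · by_cases h1 : a₂ = a2 y z <;> by_cases h2 : tB = tβ y <;> by_cases h3 : tC = tγ z <;>
        simp [hx, h1, h2, h3, mul_assoc]
    · have hx' : ¬ tα x = tA := fun h => hx h.symm
      simp [hx, hx']
  rw [key 0, key 1]
  have h0 : qα 0 ≠ 0 := by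
    intro h; rw [h] at hpos0; simp at hpos0
  have h1 : qα 1 ≠ 0 := by
    intro h; rw [h] at hpos1; simp at hpos1
  field_simp
end
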